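/- Let a, b, c ∈ {1,…,N} be pairwise distinct with c ≤ n and a, b > n (i.e. p(a)=p(b)=1, p(c)=0), and let λ_a, λ_b, λ_c ∈ ℂ be pairwise distinct. Then −[E_{ab}E_{ba}/(λ_a−λ_b), E_{bc}E_{cb}/(λ_b−λ_c)] + [E_{ac}E_{ca}/(λ_a−λ_c), E_{bc}E_{cb}/(λ_b−λ_c)] − [E_{ac}E_{ca}/(λ_a−λ_c), E_{ba}E_{ab}/(λ_b−λ_a)] = 0. -/
import Mathlib


open Finset

namespace Glnm

/-- Parity: `p(a) = 0` for bosonic indices (`a ≤ n` in 1-based terms, i.e. `a.val < n`),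
`p(a) = 1` for fermionic ones. -/
def par (n N : ℕ) (a : Fin N) : ℕ := if (a : ℕ) < n then 0 else 1

/-- The Koszul-sign realization `e^{(j)}_{ab} = σ^{p(a)+p(b)} ⊗ ⋯ ⊗ σ^{p(a)+p(b)} ⊗ e_{ab} ⊗ I ⊗ ⋯ ⊗ I`
on `(ℂ^N)^{⊗k}`, realized as matrices indexed by tuples `Fin k → Fin N`. -/
noncomputable def eop (n N k : ℕ) (j : Fin k) (a b : Fin N) :
    Matrix (Fin k → Fin N) (Fin k → Fin N) ℂ :=
  fun x y =>
    (if x j = a ∧ y j = b then (1 : ℂ) else 0) *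
      (-1 : ℂ) ^ ((par n N a + par n N b) *
        ∑ l ∈ Finset.univ.filter (fun l : Fin k => l < j), par n N (x l)) *
      ∏ l ∈ Finset.univ.filter (fun l : Fin k => l ≠ j),
        (if x l = y l then (1 : ℂ) else 0)

/-- `E_{ab} = ∑_{j=1}^k e^{(j)}_{ab}`. -/
noncomputable def Egen (n N k : ℕ) (a b : Fin N) : Matrix (Fin k → Fin N) (Fin k → Fin N) ℂ :=
  ∑ j : Fin k, eop n N k j a b

/-- The graded permutation `P_{ij} = ∑_{a,b} (−1)^{p(b)} e^{(i)}_{ab} e^{(j)}_{ba}`. -/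
noncomputable def Pg (n N k : ℕ) (i j : Fin k) : Matrix (Fin k → Fin N) (Fin k → Fin N) ℂ :=
  ∑ a : Fin N, ∑ b : Fin N,
    ((-1 : ℂ) ^ par n N b) • (eop n N k i a b * eop n N k j b a)

/-- Commutator. -/
def comm {α : Type*} [Ring α] (X Y : α) : α := X * Y - Y * X

/-- Anticommutator. -/
def acomm {α : Type*} [Ring α] (X Y : α) : α := X * Y + Y * X

/-- The dynamical connection matrix
`A_a = ∑_j z_j e^{(j)}_{aa} + ∑_{b ≠ a} (−1)^{p(b)} (E_{ab}E_{ba} − E_{aa})/(λ_a − λ_b)`. -/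
noncomputable def dynA (n N k : ℕ) (z : Fin k → ℂ) (lam : Fin N → ℂ) (a : Fin N) :
    Matrix (Fin k → Fin N) (Fin k → Fin N) ℂ :=
  (∑ j : Fin k, z j • eop n N k j a a) +
    ∑ b ∈ Finset.univ.filter (fun b : Fin N => b ≠ a),
      (((-1 : ℂ) ^ par n N b) / (lam a - lam b)) •
        (Egen n N k a b * Egen n N k b a - Egen n N k a a)

/-- The (twisted) KZ connection matrix
`B_i = ∑_c λ_c e^{(i)}_{cc} + ∑_{j ≠ i} P_{ij}/(z_i − z_j)`. -/
noncomputable def kzB (n N k : ℕ) (z : Fin k → ℂ) (lam : Fin N → ℂ) (i : Fin k) :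
    Matrix (Fin k → Fin N) (Fin k → Fin N) ℂ :=
  (∑ c : Fin N, lam c • eop n N k i c c) +
    ∑ j ∈ Finset.univ.filter (fun j : Fin k => j ≠ i),
      ((z i - z j)⁻¹) • Pg n N k i j

/-- Adjacent graded permutation `P_{s_l} = P_{l,l+1}` (0-based slots). -/
noncomputable def Ps (n N k : ℕ) (l : ℕ) (h : l + 1 < k) :
    Matrix (Fin k → Fin N) (Fin k → Fin N) ℂ :=
  Pg n N k ⟨l, Nat.lt_of_succ_lt h⟩ ⟨l + 1, h⟩

/-- The highest-configuration vector `e_1 ⊗ ⋯ ⊗ e_N ∈ (ℂ^N)^{⊗N}`. -/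
noncomputable def baseVec (N : ℕ) : (Fin N → Fin N) → ℂ :=
  fun x => if x = (fun j => j) then 1 else 0

/-- `Ω^i = ∑_{σ ∈ S_N} (−1)^{i·ℓ(σ)} P_σ (e_1 ⊗ ⋯ ⊗ e_N)`, where `P_σ = ρ σ` for the
(unique) multiplicative extension `ρ` of the adjacent graded permutations. -/
noncomputable def OmegaVec (N : ℕ) (i : ℕ)
    (ρ : Equiv.Perm (Fin N) →* Matrix (Fin N → Fin N) (Fin N → Fin N) ℂ) :
    (Fin N → Fin N) → ℂ :=
  ∑ σ : Equiv.Perm (Fin N),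
    (((Equiv.Perm.sign σ : ℤ) : ℂ) ^ i) • Matrix.mulVec (ρ σ) (baseVec N)

/-- The set of `(z, λ)` with pairwise distinct `z`'s and pairwise distinct `λ`'s. -/
def Usep (N : ℕ) : Set ((Fin N → ℂ) × (Fin N → ℂ)) :=
  {p | (∀ i j : Fin N, i ≠ j → p.1 i ≠ p.1 j) ∧ (∀ a b : Fin N, a ≠ b → p.2 a ≠ p.2 b)}


lemma eop_apply (n N k : ℕ) (j : Fin k) (a b : Fin N) (x y : Fin k → Fin N) :
    eop n N k j a b x y =
      if x j = a ∧ y = Function.update x j b then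
        (-1 : ℂ) ^ ((par n N a + par n N b) *
          ∑ l ∈ Finset.univ.filter (fun l : Fin k => l < j), par n N (x l))
      else 0 := by
  unfold eop
  by_cases hy : y = Function.update x j b
  · subst hy
    have h2 : ∀ l ∈ Finset.univ.filter (fun l : Fin k => l ≠ j),
        (if x l = Function.update x j b l then (1:ℂ) else 0) = 1 := by
      intro l hl
      simp only [mem_filter, mem_univ, true_and] at hl
      rw [Function.update_of_ne hl, if_pos rfl]
    rw [Finset.prod_congr rfl h2, Finset.prod_const_one, mul_one,
      Function.update_self]
    by_cases hx : x j = a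
    · simp [hx]
    · simp [hx]
  · have hrhs : ¬(x j = a ∧ y = Function.update x j b) := fun h => hy h.2
    rw [if_neg hrhs]
    by_cases hb : y j = b
    · have hall : ¬ ∀ l, l ≠ j → y l = x l := by
        intro hall
        apply hy
        funext l
        by_cases hl : l = j
        · subst hl; rw [Function.update_self, hb]
        · rw [Function.update_of_ne hl, hall l hl]
      push_neg at hall
      obtain ⟨l, hl, hxl⟩ := hall
      rw [Finset.prod_eq_zero (i := l) (by simp [hl])
        (by rw [if_neg (fun h => hxl h.symm)]), mul_zero]
    · have h1 : ¬(x j = a ∧ y j = b) := fun h => hb h.2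
      rw [if_neg h1, zero_mul, zero_mul]

lemma neg_one_pow_add_two_mul (e t : ℕ) : (-1:ℂ)^(e + 2*t) = (-1)^e := by
  rw [pow_add, pow_mul, neg_one_sq, one_pow, mul_one]

lemma eop_mul_apply (n N k : ℕ) (i j : Fin k) (a b c d : Fin N) (x z : Fin k → Fin N) :
    (eop n N k i a b * eop n N k j c d) x z =
      if x i = a ∧ Function.update x i b j = c ∧
          z = Function.update (Function.update x i b) j d then
        (-1 : ℂ) ^ ((par n N a + par n N b) *
            (∑ l ∈ Finset.univ.filter (fun l : Fin k => l < i), par n N (x l))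
          + (par n N c + par n N d) *
            (∑ l ∈ Finset.univ.filter (fun l : Fin k => l < j),
              par n N (Function.update x i b l)))
      else 0 := by
  rw [Matrix.mul_apply]
  rw [Finset.sum_eq_single (Function.update x i b)]
  · rw [eop_apply, eop_apply]
    by_cases h1 : x i = a
    · rw [if_pos ⟨h1, rfl⟩]
      by_cases h2 : Function.update x i b j = c
      · by_cases h3 : z = Function.update (Function.update x i b) j d
        · rw [if_pos ⟨h2, h3⟩, if_pos ⟨h1, h2, h3⟩, ← pow_add]
        · rw [if_neg (show ¬(Function.update x i b j = c ∧
              z = Function.update (Function.update x i b) j d) from fun h => h3 h.2),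
            mul_zero, if_neg (fun h => h3 h.2.2)]
      · rw [if_neg (show ¬(Function.update x i b j = c ∧
            z = Function.update (Function.update x i b) j d) from fun h => h2 h.1),
          mul_zero, if_neg (fun h => h2 h.2.1)]
    · rw [if_neg (show ¬(x i = a ∧ Function.update x i b = Function.update x i b) from
          fun h => h1 h.1), zero_mul, if_neg (fun h => h1 h.1)]
  · intro y _ hy
    rw [eop_apply, if_neg (show ¬(x i = a ∧ y = Function.update x i b) from
      fun h => hy h.2), zero_mul]
  · simp

lemma sign_aux (p q Q S T : ℕ) :
    (-1:ℂ)^((p+q)*S + Q*(q+T)) = (-1)^((p+q)*Q) * (-1)^(Q*(p+T) + (p+q)*S) := by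
  rw [← pow_add,
    show (p+q)*Q + (Q*(p+T) + (p+q)*S) = ((p+q)*S + Q*(q+T)) + 2*(p*Q) by ring,
    neg_one_pow_add_two_mul]

lemma sign_aux2 (P r s S T : ℕ) :
    (-1:ℂ)^(P*(r+T) + (r+s)*S) = (-1)^(P*(r+s)) * (-1)^((r+s)*S + P*(s+T)) := by
  rw [← pow_add,
    show P*(r+s) + ((r+s)*S + P*(s+T)) = (P*(r+T) + (r+s)*S) + 2*(P*s) by ring,
    neg_one_pow_add_two_mul]

lemma eop_mul_same (n N k : ℕ) (j : Fin k) (a b c d : Fin N) :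
    eop n N k j a b * eop n N k j c d =
      (if b = c then (1:ℂ) else 0) • eop n N k j a d := by
  ext x z
  rw [eop_mul_apply, Matrix.smul_apply, eop_apply, Function.update_idem]
  have hsum : (∑ l ∈ Finset.univ.filter (fun l : Fin k => l < j),
        par n N (Function.update x j b l))
      = ∑ l ∈ Finset.univ.filter (fun l : Fin k => l < j), par n N (x l) := by
    refine Finset.sum_congr rfl fun l hl => ?_
    simp only [mem_filter, mem_univ, true_and] at hl
    rw [Function.update_of_ne (ne_of_lt hl)]
  rw [Function.update_self, hsum]
  by_cases hbc : b = c
  · rw [if_pos hbc]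
    by_cases h1 : x j = a
    · by_cases h3 : z = Function.update x j d
      · rw [if_pos ⟨h1, hbc, h3⟩, if_pos ⟨h1, h3⟩, smul_eq_mul, one_mul, ← hbc,
          show (par n N a + par n N b) *
              (∑ l ∈ Finset.univ.filter (fun l : Fin k => l < j), par n N (x l))
            + (par n N b + par n N d) *
              (∑ l ∈ Finset.univ.filter (fun l : Fin k => l < j), par n N (x l))
            = (par n N a + par n N d) *
              (∑ l ∈ Finset.univ.filter (fun l : Fin k => l < j), par n N (x l))
            + 2 * (par n N b *
              (∑ l ∈ Finset.univ.filter (fun l : Fin k => l < j), par n N (x l))) by ring,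
          neg_one_pow_add_two_mul]
      · rw [if_neg (show ¬(x j = a ∧ b = c ∧ z = Function.update x j d) from
            fun h => h3 h.2.2),
          if_neg (show ¬(x j = a ∧ z = Function.update x j d) from fun h => h3 h.2),
          smul_zero]
    · rw [if_neg (show ¬(x j = a ∧ b = c ∧ z = Function.update x j d) from
          fun h => h1 h.1),
        if_neg (show ¬(x j = a ∧ z = Function.update x j d) from fun h => h1 h.1),
        smul_zero]
  · rw [if_neg (show ¬(x j = a ∧ b = c ∧ z = Function.update x j d) from
        fun h => hbc h.2.1), if_neg hbc, zero_smul]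

lemma eop_mul_comm (n N k : ℕ) {i j : Fin k} (hij : i ≠ j) (a b c d : Fin N) :
    eop n N k i a b * eop n N k j c d =
      ((-1:ℂ) ^ ((par n N a + par n N b) * (par n N c + par n N d))) •
        (eop n N k j c d * eop n N k i a b) := by
  ext x z
  rw [eop_mul_apply, Matrix.smul_apply, eop_mul_apply]
  have hbj : Function.update x i b j = x j := Function.update_of_ne (Ne.symm hij) _ _
  have hdi : Function.update x j d i = x i := Function.update_of_ne hij _ _
  rw [hbj, hdi, Function.update_comm hij]
  by_cases h1 : x i = a
  · by_cases h2 : x j = c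
    · by_cases h3 : z = Function.update (Function.update x j d) i b
      · rw [if_pos ⟨h1, h2, h3⟩, if_pos ⟨h2, h1, h3⟩, smul_eq_mul]
        rcases lt_or_gt_of_ne hij with hlt | hgt
        · have hSi : (∑ l ∈ Finset.univ.filter (fun l : Fin k => l < i),
                par n N (Function.update x j d l))
              = ∑ l ∈ Finset.univ.filter (fun l : Fin k => l < i), par n N (x l) := by
            refine Finset.sum_congr rfl fun l hl => ?_
            simp only [mem_filter, mem_univ, true_and] at hl
            rw [Function.update_of_ne (ne_of_lt (lt_trans hl hlt))]
          have hi_mem : i ∈ Finset.univ.filter (fun l : Fin k => l < j) := by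
            simp [hlt]
          have hSj1 : (∑ l ∈ Finset.univ.filter (fun l : Fin k => l < j),
                par n N (Function.update x i b l))
              = par n N b + ∑ l ∈ (Finset.univ.filter (fun l : Fin k => l < j)).erase i,
                  par n N (x l) := by
            rw [← Finset.add_sum_erase _ _ hi_mem, Function.update_self]
            congr 1
            refine Finset.sum_congr rfl fun l hl => ?_
            rw [Function.update_of_ne (Finset.ne_of_mem_erase hl)]
          have hSj2 : (∑ l ∈ Finset.univ.filter (fun l : Fin k => l < j), par n N (x l))
              = par n N a + ∑ l ∈ (Finset.univ.filter (fun l : Fin k => l < j)).erase i,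
                  par n N (x l) := by
            rw [← Finset.add_sum_erase _ _ hi_mem, h1]
          rw [hSi, hSj1, hSj2]
          exact sign_aux _ _ _ _ _
        · have hSj : (∑ l ∈ Finset.univ.filter (fun l : Fin k => l < j),
                par n N (Function.update x i b l))
              = ∑ l ∈ Finset.univ.filter (fun l : Fin k => l < j), par n N (x l) := by
            refine Finset.sum_congr rfl fun l hl => ?_
            simp only [mem_filter, mem_univ, true_and] at hl
            rw [Function.update_of_ne (ne_of_lt (lt_trans hl hgt))]
          have hj_mem : j ∈ Finset.univ.filter (fun l : Fin k => l < i) := by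
            simp [hgt]
          have hSi1 : (∑ l ∈ Finset.univ.filter (fun l : Fin k => l < i), par n N (x l))
              = par n N c + ∑ l ∈ (Finset.univ.filter (fun l : Fin k => l < i)).erase j,
                  par n N (x l) := by
            rw [← Finset.add_sum_erase _ _ hj_mem, h2]
          have hSi2 : (∑ l ∈ Finset.univ.filter (fun l : Fin k => l < i),
                par n N (Function.update x j d l))
              = par n N d + ∑ l ∈ (Finset.univ.filter (fun l : Fin k => l < i)).erase j,
                  par n N (x l) := by
            rw [← Finset.add_sum_erase _ _ hj_mem, Function.update_self]
            congr 1
            refine Finset.sum_congr rfl fun l hl => ?_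
            rw [Function.update_of_ne (Finset.ne_of_mem_erase hl)]
          rw [hSj, hSi1, hSi2]
          exact sign_aux2 _ _ _ _ _
      · rw [if_neg (show ¬(x i = a ∧ x j = c ∧
            z = Function.update (Function.update x j d) i b) from fun h => h3 h.2.2),
          if_neg (show ¬(x j = c ∧ x i = a ∧
            z = Function.update (Function.update x j d) i b) from fun h => h3 h.2.2),
          smul_zero]
    · rw [if_neg (show ¬(x i = a ∧ x j = c ∧
          z = Function.update (Function.update x j d) i b) from fun h => h2 h.2.1),
        if_neg (show ¬(x j = c ∧ x i = a ∧
          z = Function.update (Function.update x j d) i b) from fun h => h2 h.1),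
        smul_zero]
  · rw [if_neg (show ¬(x i = a ∧ x j = c ∧
        z = Function.update (Function.update x j d) i b) from fun h => h1 h.1),
      if_neg (show ¬(x j = c ∧ x i = a ∧
        z = Function.update (Function.update x j d) i b) from fun h => h1 h.2.1),
      smul_zero]


lemma sum_split (k : ℕ) (M : Type*) [AddCommMonoid M] (f : Fin k → Fin k → M) :
    ∑ i : Fin k, ∑ j : Fin k, f i j
      = (∑ i : Fin k, f i i) + ∑ i : Fin k, ∑ j ∈ Finset.univ.erase i, f i j := by
  rw [← Finset.sum_add_distrib]
  exact Finset.sum_congr rfl fun i _ => (Finset.add_sum_erase univ (f i) (mem_univ i)).symm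

lemma Egen_rel (n N k : ℕ) (a b c d : Fin N) :
    Egen n N k a b * Egen n N k c d
      - ((-1:ℂ) ^ ((par n N a + par n N b) * (par n N c + par n N d))) •
        (Egen n N k c d * Egen n N k a b)
    = (if b = c then (1:ℂ) else 0) • Egen n N k a d
      - ((-1:ℂ) ^ ((par n N a + par n N b) * (par n N c + par n N d))) •
        ((if d = a then (1:ℂ) else 0) • Egen n N k c b) := by
  have expand : ∀ a' b' c' d' : Fin N,
      Egen n N k a' b' * Egen n N k c' d'
        = (if b' = c' then (1:ℂ) else 0) • Egen n N k a' d'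
          + ∑ i : Fin k, ∑ j ∈ Finset.univ.erase i, eop n N k i a' b' * eop n N k j c' d' := by
    intro a' b' c' d'
    rw [Egen, Egen, Finset.sum_mul_sum, sum_split]
    congr 1
    rw [Egen, Finset.smul_sum]
    exact Finset.sum_congr rfl fun i _ => eop_mul_same n N k i a' b' c' d'
  have offdiag : (∑ i : Fin k, ∑ j ∈ Finset.univ.erase i, eop n N k i a b * eop n N k j c d)
      = ((-1:ℂ) ^ ((par n N a + par n N b) * (par n N c + par n N d))) •
        ∑ i : Fin k, ∑ j ∈ Finset.univ.erase i, eop n N k i c d * eop n N k j a b := by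
    rw [Finset.smul_sum]
    rw [show (∑ i : Fin k, ((-1:ℂ) ^ ((par n N a + par n N b) * (par n N c + par n N d))) •
        ∑ j ∈ Finset.univ.erase i, eop n N k i c d * eop n N k j a b)
      = ∑ i : Fin k, ∑ j ∈ Finset.univ.erase i,
          ((-1:ℂ) ^ ((par n N a + par n N b) * (par n N c + par n N d))) •
            (eop n N k i c d * eop n N k j a b) from
      Finset.sum_congr rfl fun i _ => Finset.smul_sum]
    rw [Finset.sum_comm' (t' := Finset.univ) (s' := fun j => Finset.univ.erase j)
      (by intro x y; simp [Finset.mem_erase, eq_comm, ne_comm])]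
    exact Finset.sum_congr rfl fun i _ => Finset.sum_congr rfl fun j hj =>
      eop_mul_comm n N k (Finset.mem_erase.mp hj).1 a b c d
  rw [expand a b c d, expand c d a b, offdiag, smul_add]
  abel

lemma comm_smul_smul {α : Type*} [Ring α] [Algebra ℂ α] (u v : ℂ) (X Y : α) :
    Glnm.comm (u • X) (v • Y) = (u * v) • Glnm.comm X Y := by
  simp only [Glnm.comm, smul_mul_assoc, mul_smul_comm, smul_smul, smul_sub, mul_comm u v]

end Glnm

open Glnm in
/-- three-index commutator identity for `p(a)=p(b)=1`, `p(c)=0`. -/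
theorem triple_commutator_ffb (n m k : ℕ) (hk : 1 ≤ k)
    (a b c : Fin (n + m)) (hab : a ≠ b) (hac : a ≠ c) (hbc : b ≠ c)
    (hpc : (c : ℕ) < n) (hpa : n ≤ (a : ℕ)) (hpb : n ≤ (b : ℕ))
    (lamA lamB lamC : ℂ) (hl1 : lamA ≠ lamB) (hl2 : lamA ≠ lamC) (hl3 : lamB ≠ lamC) :
    -comm ((lamA - lamB)⁻¹ • (Egen n (n + m) k a b * Egen n (n + m) k b a))
        ((lamB - lamC)⁻¹ • (Egen n (n + m) k b c * Egen n (n + m) k c b)) +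
      comm ((lamA - lamC)⁻¹ • (Egen n (n + m) k a c * Egen n (n + m) k c a))
        ((lamB - lamC)⁻¹ • (Egen n (n + m) k b c * Egen n (n + m) k c b)) -
      comm ((lamA - lamC)⁻¹ • (Egen n (n + m) k a c * Egen n (n + m) k c a))
        ((lamB - lamA)⁻¹ • (Egen n (n + m) k b a * Egen n (n + m) k a b)) = 0 := by
  have pa : par n (n+m) a = 1 := if_neg (not_lt.mpr hpa)
  have pb : par n (n+m) b = 1 := if_neg (not_lt.mpr hpb)
  have pc : par n (n+m) c = 0 := if_pos hpc
  set A := Egen n (n + m) k a b with hAdef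
  set A' := Egen n (n + m) k b a with hA'def
  set B := Egen n (n + m) k b c with hBdef
  set B' := Egen n (n + m) k c b with hB'def
  set C := Egen n (n + m) k a c with hCdef
  set C' := Egen n (n + m) k c a with hC'def
  have R4 := Egen_rel n (n+m) k a b b c
  have R5 := Egen_rel n (n+m) k a b c a
  have R6 := Egen_rel n (n+m) k b a a c
  have R7 := Egen_rel n (n+m) k b a c b
  have R8 := Egen_rel n (n+m) k b c c a
  have R9 := Egen_rel n (n+m) k a c c b
  have R10 := Egen_rel n (n+m) k b c a c
  have R11 := Egen_rel n (n+m) k c b c a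
  have R12 := Egen_rel n (n+m) k a b c b
  have R13 := Egen_rel n (n+m) k a b a c
  have R14 := Egen_rel n (n+m) k b a b c
  have R15 := Egen_rel n (n+m) k b a c a
  norm_num [pa, pb, pc, hab, hac, hbc, Ne.symm hab, Ne.symm hac, Ne.symm hbc]
    at R4 R5 R6 R7 R8 R9 R10 R11 R12 R13 R14 R15
  -- difference-zero forms
  have z4 : A*B - B*A - C = 0 := sub_eq_zero.mpr R4
  have z5 : A*C' - C'*A + B' = 0 := by rw [R5]; abel
  have z6 : A'*C - C*A' - B = 0 := sub_eq_zero.mpr R6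
  have z7 : A'*B' - B'*A' + C' = 0 := by rw [R7]; abel
  have z8 : B*C' + C'*B - A' = 0 := sub_eq_zero.mpr R8
  have z9 : C*B' + B'*C - A = 0 := sub_eq_zero.mpr R9
  have z10 : B*C + C*B = 0 := R10
  have z11 : B'*C' + C'*B' = 0 := R11
  have z12 : A*B' - B'*A = 0 := R12
  have z13 : A*C - C*A = 0 := R13
  have z14 : A'*B - B*A' = 0 := R14
  have z15 : A'*C' - C'*A' = 0 := R15
  set K : Matrix (Fin k → Fin (n+m)) (Fin k → Fin (n+m)) ℂ := C*A'*B' - B*A*C' with hK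
  have K1 : comm (A*A') (B*B') = K := by
    have cert : comm (A*A') (B*B') - K
        = A*(A'*B - B*A')*B' + (A*B)*(A'*B' - B'*A' + C') + (A*B - B*A - C)*(B'*A')
          + B*(A*B' - B'*A)*A' - C*(A'*B' - B'*A' + C') - (A*B - B*A - C)*C' := by
      simp only [Glnm.comm, hK]; noncomm_ring
    rw [z14, z7, z4, z12] at cert
    simp only [mul_zero, zero_mul, add_zero, zero_add, sub_zero, zero_sub, neg_zero] at cert
    exact sub_eq_zero.mp cert
  have K2 : comm (C*C') (B*B') = K := by
    have cert : comm (C*C') (B*B') - K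
        = C*(B*C' + C'*B - A')*B' - (B*C + C*B)*(C'*B') + (B*C)*(B'*C' + C'*B')
          - B*(C*B' + B'*C - A)*C' := by
      simp only [Glnm.comm, hK]; noncomm_ring
    rw [z8, z10, z11, z9] at cert
    simp only [mul_zero, zero_mul, add_zero, zero_add, sub_zero, zero_sub, neg_zero] at cert
    exact sub_eq_zero.mp cert
  have K3 : comm (C*C') (A'*A) = K := by
    have cert : comm (C*C') (A'*A) - K
        = -(C*(A'*C' - C'*A')*A) - (A'*C - C*A' - B)*(C'*A) - (A'*C)*(A*C' - C'*A + B')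
          - A'*(A*C - C*A)*C' + B*(A*C' - C'*A + B') + (A'*C - C*A' - B)*B' := by
      simp only [Glnm.comm, hK]; noncomm_ring
    rw [z15, z6, z5, z13] at cert
    simp only [mul_zero, zero_mul, add_zero, zero_add, sub_zero, zero_sub, neg_zero,
      neg_add_cancel, add_neg_cancel] at cert
    exact sub_eq_zero.mp cert
  rw [comm_smul_smul, comm_smul_smul, comm_smul_smul, K1, K2, K3,
    ← neg_smul, ← add_smul, ← sub_smul]
  have hu : lamA - lamB ≠ 0 := sub_ne_zero.mpr hl1
  have hv : lamB - lamC ≠ 0 := sub_ne_zero.mpr hl3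
  have hw : lamA - lamC ≠ 0 := sub_ne_zero.mpr hl2
  have hu' : lamB - lamA ≠ 0 := sub_ne_zero.mpr (Ne.symm hl1)
  have hs : -((lamA - lamB)⁻¹ * (lamB - lamC)⁻¹) + (lamA - lamC)⁻¹ * (lamB - lamC)⁻¹
      - (lamA - lamC)⁻¹ * (lamB - lamA)⁻¹ = 0 := by
    field_simp
    ring
  rw [hs, zero_smul]
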